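/- arXiv:1206.6004 — 2 statements merged into one kernel-verified Lean document; each statement's English description precedes it below -/
import Mathlib

section
/- For every real x < 0, the polynomial p(y) = x y⁵ + x + x²y² − x⁴y − 2y³ has exactly one real root y. -/
/-!
The polynomial is strictly decreasing in `y`: its derivative is
`5 x y⁴ - 6 (y - x²/6)² - 5 x⁴/6`, negative when `x < 0`. It is positive at `y = -1`
(value `x⁴ + x² + 2`) and negative at `y = 0` (value `x`), so the intermediate value theorem
gives a root, unique by monotonicity.
-/

open Set

theorem StrictAnti.existsUnique_eq_of_mem_Icc {α δ : Type*} [ConditionallyCompleteLinearOrder α]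
    [TopologicalSpace α] [OrderTopology α] [DenselyOrdered α] [LinearOrder δ]
    [TopologicalSpace δ] [OrderClosedTopology δ] {f : α → δ} (hf : StrictAnti f)
    (hcont : Continuous f) {a b : α} {c : δ} (hc : c ∈ Icc (f b) (f a)) : ∃! y, f y = c := by
  have hab : a ≤ b := hf.le_iff_ge.mp (hc.1.trans hc.2)
  obtain ⟨y, -, hy⟩ := intermediate_value_Icc' hab hcont.continuousOn hc
  exact ⟨y, hy, fun z hz => hf.injective (hz.trans hy.symm)⟩

namespace HulekCraig

def poly (x y : ℝ) : ℝ := x * y ^ 5 + x + x ^ 2 * y ^ 2 - x ^ 4 * y - 2 * y ^ 3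

theorem hasDerivAt_poly (x y : ℝ) :
    HasDerivAt (poly x) (5 * x * y ^ 4 + 2 * x ^ 2 * y - x ^ 4 - 6 * y ^ 2) y := by
  have h5 := (hasDerivAt_pow 5 y).const_mul x
  have h2 := (hasDerivAt_pow 2 y).const_mul (x ^ 2)
  have h1 := (hasDerivAt_id y).const_mul (x ^ 4)
  have h3 := (hasDerivAt_pow 3 y).const_mul (2 : ℝ)
  exact ((((h5.add_const x).add h2).sub h1).sub h3).congr_deriv (by ring)

theorem strictAnti_poly {x : ℝ} (hx : x < 0) : StrictAnti (poly x) := by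
  apply strictAnti_of_deriv_neg
  intro y
  rw [(hasDerivAt_poly x y).deriv]
  have hquartic : 5 * x * y ^ 4 ≤ 0 :=
    mul_nonpos_of_nonpos_of_nonneg (by linarith) (by positivity)
  have hsquares : 0 < 6 * (y - x ^ 2 / 6) ^ 2 + 5 / 6 * x ^ 4 := by
    have := hx.ne
    positivity
  linarith

theorem poly_neg_one (x : ℝ) : poly x (-1) = x ^ 4 + x ^ 2 + 2 := by
  simp only [poly]; ring

theorem poly_zero (x : ℝ) : poly x 0 = x := by
  simp [poly]

end HulekCraig

/-- For every real x < 0, p(y) = xy⁵ + x + x²y² − x⁴y − 2y³ has exactly one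
real root y. -/
theorem hc_one_real_root (x : ℝ) (hx : x < 0) :
    ∃! y : ℝ, x * y ^ 5 + x + x ^ 2 * y ^ 2 - x ^ 4 * y - 2 * y ^ 3 = 0 := by
  have hsign : (0 : ℝ) ∈ Icc (HulekCraig.poly x 0) (HulekCraig.poly x (-1)) := by
    rw [HulekCraig.poly_zero, HulekCraig.poly_neg_one]
    exact ⟨hx.le, by positivity⟩
  exact (HulekCraig.strictAnti_poly hx).existsUnique_eq_of_mem_Icc
    (by fun_prop [HulekCraig.poly]) hsign
end

section
/- For every real x with 0 < x < 1, the polynomial p(y) = x y⁵ + x + x²y² − x⁴y − 2y³ has exactly three distinct real roots y. -/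
/-!
Sign changes of `p` on `-2/x < 0 < 1 < 2/x` give three real roots by the intermediate value
theorem. A fourth root is impossible: by Rolle, `p'` would vanish at three points, so `p'` would
attain a nonnegative maximum at an interior point `m` of their span, where `p'' m = 0`. But on the
set `p'' = 0` one has `p' < 0`, because `y · p''(y) = 0` turns `16 p'(y)` into
`-3 (4y - x²)² - 13 x⁴`.
-/

open Set

lemma exists_mem_Ioo_isMaxOn_Icc {g : ℝ → ℝ} {a b c : ℝ} (hab : a < b) (hbc : b < c)
    (hg : ContinuousOn g (Icc a c)) (ha : g a ≤ g b) (hc : g c ≤ g b) :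
    ∃ m ∈ Ioo a c, IsMaxOn g (Icc a c) m := by
  obtain ⟨w, hw, hmax⟩ := isCompact_Icc.exists_isMaxOn (nonempty_Icc.2 (hab.trans hbc).le) hg
  by_cases hwI : w ∈ Ioo a c
  · exact ⟨w, hwI, hmax⟩
  · have hwb : g w ≤ g b := by
      rcases eq_endpoints_or_mem_Ioo_of_mem_Icc hw with rfl | rfl | h
      exacts [ha, hc, absurd h hwI]
    exact ⟨b, ⟨hab, hbc⟩, fun y hy => (hmax hy).trans hwb⟩

lemma exists_deriv_eq_zero_and_le {g g' : ℝ → ℝ} (hg : ∀ y, HasDerivAt g (g' y) y)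
    {a b c : ℝ} (hab : a < b) (hbc : b < c) (ha : g a ≤ g b) (hc : g c ≤ g b) :
    ∃ m, g' m = 0 ∧ g b ≤ g m := by
  have hcont : Continuous g := continuous_iff_continuousAt.2 fun y => (hg y).continuousAt
  obtain ⟨m, hm, hmax⟩ := exists_mem_Ioo_isMaxOn_Icc hab hbc hcont.continuousOn ha hc
  exact ⟨m, (hmax.isLocalMax (Icc_mem_nhds hm.1 hm.2)).hasDerivAt_eq_zero (hg m),
    hmax ⟨hab.le, hbc.le⟩⟩

lemma exists_deriv2_eq_zero_and_deriv_nonneg {f f' f'' : ℝ → ℝ}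
    (hf : ∀ y, HasDerivAt f (f' y) y) (hf' : ∀ y, HasDerivAt f' (f'' y) y)
    {a b c d : ℝ} (hab : a < b) (hbc : b < c) (hcd : c < d)
    (ha : f a = 0) (hb : f b = 0) (hc : f c = 0) (hd : f d = 0) :
    ∃ m, f'' m = 0 ∧ 0 ≤ f' m := by
  have hcont : Continuous f := continuous_iff_continuousAt.2 fun y => (hf y).continuousAt
  have rolle : ∀ {u v}, u < v → f u = 0 → f v = 0 → ∃ z ∈ Ioo u v, f' z = 0 :=
    fun huv hu hv => exists_hasDerivAt_eq_zero huv hcont.continuousOn (hu.trans hv.symm)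
      fun y _ => hf y
  obtain ⟨z₁, hz₁, h₁⟩ := rolle hab ha hb
  obtain ⟨z₂, hz₂, h₂⟩ := rolle hbc hb hc
  obtain ⟨z₃, hz₃, h₃⟩ := rolle hcd hc hd
  obtain ⟨m, hm, hle⟩ := exists_deriv_eq_zero_and_le hf' (hz₁.2.trans hz₂.1)
    (hz₂.2.trans hz₃.1) (by rw [h₁, h₂]) (by rw [h₃, h₂])
  exact ⟨m, hm, h₂ ▸ hle⟩

lemma eq_or_eq_or_eq_of_not_four_lt {α : Type*} [LinearOrder α] {S : α → Prop}
    (hS : ∀ a b c d, a < b → b < c → c < d → S a → S b → S c → S d → False)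
    {a b c y : α} (hab : a < b) (hbc : b < c) (ha : S a) (hb : S b) (hc : S c) (hy : S y) :
    y = a ∨ y = b ∨ y = c := by
  by_contra! ⟨hya, hyb, hyc⟩
  rcases hya.lt_or_gt with h | h
  · exact hS y a b c h hab hbc hy ha hb hc
  rcases hyb.lt_or_gt with h' | h'
  · exact hS a y b c h h' hbc ha hy hb hc
  rcases hyc.lt_or_gt with h'' | h''
  · exact hS a b y c hab h' h'' ha hb hy hc
  · exact hS a b c y hab hbc h'' ha hb hc hy

def quintic (x y : ℝ) : ℝ := x * y ^ 5 + x + x ^ 2 * y ^ 2 - x ^ 4 * y - 2 * y ^ 3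

def quinticDeriv (x y : ℝ) : ℝ := 5 * x * y ^ 4 + 2 * x ^ 2 * y - x ^ 4 - 6 * y ^ 2

def quinticDeriv2 (x y : ℝ) : ℝ := 20 * x * y ^ 3 + 2 * x ^ 2 - 12 * y

lemma hasDerivAt_quintic (x y : ℝ) : HasDerivAt (quintic x) (quinticDeriv x y) y := by
  have h := (((((hasDerivAt_pow 5 y).const_mul x).add_const x).add
    ((hasDerivAt_pow 2 y).const_mul (x ^ 2))).sub ((hasDerivAt_id y).const_mul (x ^ 4))).sub
    ((hasDerivAt_pow 3 y).const_mul 2)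
  exact h.congr_deriv (by norm_num [quinticDeriv]; ring)

lemma hasDerivAt_quinticDeriv (x y : ℝ) :
    HasDerivAt (quinticDeriv x) (quinticDeriv2 x y) y := by
  have h := ((((hasDerivAt_pow 4 y).const_mul (5 * x)).add
    ((hasDerivAt_id y).const_mul (2 * x ^ 2))).sub_const (x ^ 4)).sub
    ((hasDerivAt_pow 2 y).const_mul 6)
  exact h.congr_deriv (by norm_num [quinticDeriv2]; ring)

lemma quinticDeriv_neg_of_quinticDeriv2_eq_zero {x y : ℝ} (hx : 0 < x)
    (hy : quinticDeriv2 x y = 0) : quinticDeriv x y < 0 := by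
  have key : 16 * quinticDeriv x y = 4 * y * quinticDeriv2 x y
      - 3 * (4 * y - x ^ 2) ^ 2 - 13 * x ^ 4 := by
    simp only [quinticDeriv, quinticDeriv2]
    ring
  rw [hy] at key
  nlinarith [pow_pos hx 4, sq_nonneg (4 * y - x ^ 2)]

lemma quintic_not_four_roots {x : ℝ} (hx : 0 < x) (a b c d : ℝ)
    (hab : a < b) (hbc : b < c) (hcd : c < d) (ha : quintic x a = 0) (hb : quintic x b = 0)
    (hc : quintic x c = 0) (hd : quintic x d = 0) : False := by
  obtain ⟨m, hm, hnonneg⟩ := exists_deriv2_eq_zero_and_deriv_nonneg (hasDerivAt_quintic x)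
    (hasDerivAt_quinticDeriv x) hab hbc hcd ha hb hc hd
  exact (quinticDeriv_neg_of_quinticDeriv2_eq_zero hx hm).not_ge hnonneg

lemma quintic_div_mul_pow_four {x : ℝ} (hx : x ≠ 0) (t : ℝ) :
    quintic x (t / x) * x ^ 4 = t ^ 5 + x ^ 5 + t ^ 2 * x ^ 4 - t * x ^ 7 - 2 * t ^ 3 * x := by
  simp only [quintic]
  field_simp

lemma quintic_neg_two_div_neg {x : ℝ} (hx0 : 0 < x) (hx1 : x < 1) : quintic x (-2 / x) < 0 := by
  have h := quintic_div_mul_pow_four hx0.ne' (-2)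
  nlinarith [pow_pos hx0 4, pow_lt_one₀ hx0.le hx1 (n := 4) (by norm_num),
    pow_lt_one₀ hx0.le hx1 (n := 5) (by norm_num), pow_lt_one₀ hx0.le hx1 (n := 7) (by norm_num)]

lemma quintic_two_div_pos {x : ℝ} (hx0 : 0 < x) (hx1 : x < 1) : 0 < quintic x (2 / x) := by
  have h := quintic_div_mul_pow_four hx0.ne' 2
  nlinarith [pow_pos hx0 4, pow_pos hx0 5, pow_lt_one₀ hx0.le hx1 (n := 7) (by norm_num)]

lemma quintic_one_neg {x : ℝ} (hx0 : 0 < x) (hx1 : x < 1) : quintic x 1 < 0 := by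
  have h : quintic x 1 = -((1 - x) * (2 - x ^ 2 - x ^ 3)) := by
    simp only [quintic]
    ring
  rw [h, neg_neg_iff_pos]
  have h2 : x ^ 2 < 1 := pow_lt_one₀ hx0.le hx1 two_ne_zero
  have h3 : x ^ 3 < 1 := pow_lt_one₀ hx0.le hx1 three_ne_zero
  exact mul_pos (by linarith) (by linarith)

/-- For every real x with 0 < x < 1, p(y) = xy⁵ + x + x²y² − x⁴y − 2y³ has exactly
three distinct real roots. -/
theorem hc_three_real_roots (x : ℝ) (hx0 : 0 < x) (hx1 : x < 1) :
    ∃ a b c : ℝ, a ≠ b ∧ a ≠ c ∧ b ≠ c ∧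
      (x * a ^ 5 + x + x ^ 2 * a ^ 2 - x ^ 4 * a - 2 * a ^ 3 = 0) ∧
      (x * b ^ 5 + x + x ^ 2 * b ^ 2 - x ^ 4 * b - 2 * b ^ 3 = 0) ∧
      (x * c ^ 5 + x + x ^ 2 * c ^ 2 - x ^ 4 * c - 2 * c ^ 3 = 0) ∧
      ∀ y : ℝ, x * y ^ 5 + x + x ^ 2 * y ^ 2 - x ^ 4 * y - 2 * y ^ 3 = 0 →
        y = a ∨ y = b ∨ y = c := by
  have hcont : Continuous (quintic x) := by
    unfold quintic
    fun_prop
  have h0 : 0 < quintic x 0 := by simpa [quintic] using hx0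
  have h1 := quintic_one_neg hx0 hx1
  obtain ⟨a, ha, hpa⟩ := intermediate_value_Ioo (div_neg_of_neg_of_pos (by norm_num) hx0).le
    hcont.continuousOn ⟨quintic_neg_two_div_neg hx0 hx1, h0⟩
  obtain ⟨b, hb, hpb⟩ := intermediate_value_Ioo' zero_le_one
    hcont.continuousOn ⟨h1, h0⟩
  obtain ⟨c, hc, hpc⟩ := intermediate_value_Ioo ((one_lt_div hx0).2 (by linarith)).le
    hcont.continuousOn ⟨h1, quintic_two_div_pos hx0 hx1⟩
  have hab : a < b := ha.2.trans hb.1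
  have hbc : b < c := hb.2.trans hc.1
  refine ⟨a, b, c, hab.ne, (hab.trans hbc).ne, hbc.ne, hpa, hpb, hpc, fun y hy => ?_⟩
  exact eq_or_eq_or_eq_of_not_four_lt (S := (quintic x · = 0)) (quintic_not_four_roots hx0)
    hab hbc hpa hpb hpc hy
end
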